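/- Let φ be a function on the nonzero fractional ideals of O_K for K = ℚ(√-23) defined on ideals 𝔞 coprime to 23 by φ(𝔞) = χ(Re α)·α where 𝔞³ = (α) and χ is the Legendre symbol mod 23. Then φ is well-defined: it does not depend on the choice of generator α of 𝔞³. -/
import Mathlib

instance : Fact (Nat.Prime 23) := ⟨by norm_num⟩

/-- The Legendre symbol mod 23 of a rational number with (odd) denominator,
via `χ(a/b) = χ(a·b)`. -/
noncomputable def ratLegendre (r : ℚ) : ℤ := legendreSym 23 (r.num * r.den)

lemma ratLegendre_neg (r : ℚ) : ratLegendre (-r) = - ratLegendre r := by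
  unfold ratLegendre
  rw [Rat.neg_num, Rat.neg_den, neg_mul, show (-(r.num * r.den)) = -1 * (r.num * r.den) by ring,
    legendreSym.mul, show legendreSym 23 (-1) = -1 by decide]
  ring

lemma intlem (m k : ℤ) (h : 529*m^2 + 23*k^2 = 2116) : k = 0 ∧ (m = 2 ∨ m = -2) := by
  have hm1 : -2 ≤ m := by nlinarith [sq_nonneg k]
  have hm2 : m ≤ 2 := by nlinarith [sq_nonneg k]
  have hk1 : -10 ≤ k := by nlinarith [sq_nonneg m]
  have hk2 : k ≤ 10 := by nlinarith [sq_nonneg m]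
  interval_cases m <;> interval_cases k <;> omega

theorem stmt15 (K : Type*) [Field K] [NumberField K]
    (s : K) (hs : s ^ 2 = -23) (hgen : Algebra.adjoin ℚ {s} = ⊤)
    (σ : K ≃ₐ[ℚ] K) (hσ : σ s = -s)
    (α β : NumberField.RingOfIntegers K) (hα : α ≠ 0)
    (hspan : Ideal.span {α} = Ideal.span {β})
    (rα rβ : ℚ)
    (hrα : algebraMap ℚ K rα = ((α : K) + σ (α : K)) / 2)
    (hrβ : algebraMap ℚ K rβ = ((β : K) + σ (β : K)) / 2) :
    (ratLegendre rα : K) * (α : K) = (ratLegendre rβ : K) * (β : K) := by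
  have hinj : Function.Injective (algebraMap ℚ K) := (algebraMap ℚ K).injective
  -- every element of K is a + b s
  have hrepr : ∀ x : K, ∃ a b : ℚ, x = algebraMap ℚ K a + algebraMap ℚ K b * s := by
    intro x
    have hx : x ∈ Algebra.adjoin ℚ {s} := hgen ▸ Algebra.mem_top
    induction hx using Algebra.adjoin_induction with
    | mem y hy => exact ⟨0, 1, by simp [Set.mem_singleton_iff.mp hy]⟩
    | algebraMap q => exact ⟨q, 0, by simp⟩
    | add y z _ _ hy hz =>
        obtain ⟨a, b, rfl⟩ := hy; obtain ⟨c, d, rfl⟩ := hz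
        exact ⟨a + c, b + d, by push_cast [map_add]; ring⟩
    | mul y z _ _ hy hz =>
        obtain ⟨a, b, rfl⟩ := hy; obtain ⟨c, d, rfl⟩ := hz
        refine ⟨a*c - 23*(b*d), a*d + b*c, ?_⟩
        simp only [map_add, map_mul, map_sub, map_ofNat]
        linear_combination (algebraMap ℚ K b * algebraMap ℚ K d) * hs
  -- β = c·α, α = d·β, with c·d = 1
  obtain ⟨c, hc⟩ : ∃ c, c * α = β := by
    rw [← Ideal.mem_span_singleton']; rw [hspan]; exact Ideal.mem_span_singleton_self β
  obtain ⟨d, hd⟩ : ∃ d, d * β = α := by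
    rw [← Ideal.mem_span_singleton']; rw [← hspan]; exact Ideal.mem_span_singleton_self α
  have hcd : d * c = 1 := by
    have h1 : (d * c) * α = 1 * α := by rw [one_mul, mul_assoc, hc, hd]
    exact mul_right_cancel₀ hα h1
  -- integrality toolkit
  have key : ∀ q : ℚ, IsIntegral ℤ (algebraMap ℚ K q) → ∃ n : ℤ, (n:ℚ) = q := by
    intro q hq
    have : IsIntegral ℤ q := (isIntegral_algebraMap_iff hinj).mp hq
    exact IsIntegrallyClosed.isIntegral_iff.mp this
  have hsint : IsIntegral ℤ s := ⟨Polynomial.X^2 + Polynomial.C 23, by monicity!, by simp [hs]⟩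
  have hcint : IsIntegral ℤ (c : K) := c.2
  have hdint : IsIntegral ℤ (d : K) := d.2
  have hσcint : IsIntegral ℤ (σ (c : K)) := hcint.map (RingHom.toIntAlgHom (σ : K →+* K))
  have hσdint : IsIntegral ℤ (σ (d : K)) := hdint.map (RingHom.toIntAlgHom (σ : K →+* K))
  -- coordinates of c and d
  obtain ⟨a, b, hab⟩ := hrepr (c : K)
  obtain ⟨a', b', hab'⟩ := hrepr (d : K)
  have hσc : σ (c : K) = algebraMap ℚ K a - algebraMap ℚ K b * s := by
    rw [hab]; simp only [map_add, map_mul, AlgEquiv.commutes, hσ]; ring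
  have hσd : σ (d : K) = algebraMap ℚ K a' - algebraMap ℚ K b' * s := by
    rw [hab']; simp only [map_add, map_mul, AlgEquiv.commutes, hσ]; ring
  have hnc : (c : K) * σ (c : K) = algebraMap ℚ K (a^2 + 23*b^2) := by
    rw [hσc, hab]
    simp only [map_add, map_mul, map_pow, map_ofNat]
    linear_combination (-(algebraMap ℚ K b)^2) * hs
  have hnd : (d : K) * σ (d : K) = algebraMap ℚ K (a'^2 + 23*b'^2) := by
    rw [hσd, hab']
    simp only [map_add, map_mul, map_pow, map_ofNat]
    linear_combination (-(algebraMap ℚ K b')^2) * hs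
  obtain ⟨n, hn⟩ := key _ (hnc ▸ hcint.mul hσcint)
  obtain ⟨n', hn'⟩ := key _ (hnd ▸ hdint.mul hσdint)
  -- cd = 1 gives n·n' = 1
  have hcdK : (c : K) * (d : K) = 1 := by
    have := congrArg (algebraMap (NumberField.RingOfIntegers K) K) hcd
    push_cast at this
    rw [mul_comm] at this; exact_mod_cast this
  have hσcd : σ (c : K) * σ (d : K) = 1 := by rw [← map_mul, hcdK, map_one]
  have hprod : (a^2 + 23*b^2) * (a'^2 + 23*b'^2) = 1 := by
    apply hinj
    rw [map_mul, map_one, ← hnc, ← hnd]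
    calc (c:K) * σ (c:K) * ((d:K) * σ (d:K))
        = ((c:K) * (d:K)) * (σ (c:K) * σ (d:K)) := by ring
      _ = 1 := by rw [hcdK, hσcd, one_mul]
  have hnn' : n * n' = 1 := by
    have : ((n : ℚ)) * (n' : ℚ) = 1 := by rw [hn, hn', hprod]
    exact_mod_cast this
  have hn1 : n = 1 := by
    refine Int.eq_one_of_mul_eq_one_right ?_ hnn'
    have : (0:ℚ) ≤ (n:ℚ) := by rw [hn]; positivity
    exact_mod_cast this
  have hone : a^2 + 23*b^2 = 1 := by rw [← hn, hn1]; norm_num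
  -- trace conditions
  have htr : (c : K) + σ (c : K) = algebraMap ℚ K (2*a) := by
    rw [hσc, hab]; push_cast [map_mul, map_ofNat]; ring
  obtain ⟨m, hm⟩ := key _ (htr ▸ hcint.add hσcint)
  have htr2 : ((c : K) - σ (c : K)) * s = algebraMap ℚ K (-46*b) := by
    rw [hσc, hab]
    simp only [map_mul, map_neg, map_ofNat]
    linear_combination (2 * algebraMap ℚ K b) * hs
  obtain ⟨kk, hk⟩ := key _ (htr2 ▸ (hcint.sub hσcint).mul hsint)
  -- solve the diophantine condition
  have hQ : (529*(m:ℚ)^2 + 23*(kk:ℚ)^2) = 2116 := by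
    linear_combination 529*((m:ℚ)+2*a)*hm + 23*((kk:ℚ) - 46*b)*hk + 2116*hone
  have hZ : 529*m^2 + 23*kk^2 = 2116 := by exact_mod_cast hQ
  obtain ⟨hk0, hm2⟩ := intlem m kk hZ
  have hb0 : b = 0 := by
    have : ((0:ℤ):ℚ) = -46*b := hk0 ▸ hk
    push_cast at this; linarith
  have hβK : (β : K) = (c : K) * (α : K) := by
    have := congrArg (algebraMap (NumberField.RingOfIntegers K) K) hc
    push_cast at this; exact this.symm
  have ha : a = 1 ∨ a = -1 := by
    rcases hm2 with h | h
    · left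
      have : ((2:ℤ):ℚ) = 2*a := h ▸ hm
      push_cast at this; linarith
    · right
      have : ((-2:ℤ):ℚ) = 2*a := h ▸ hm
      push_cast at this; linarith
  rcases ha with h1 | h1
  · -- c = 1, β = α
    have hcK1 : (c : K) = 1 := by rw [hab, hb0, h1]; simp
    have hβα : (β : K) = (α : K) := by rw [hβK, hcK1, one_mul]
    have : rβ = rα := by
      apply hinj; rw [hrα, hrβ, hβα]
    rw [this, hβα]
  · -- c = -1, β = -α
    have hcK1 : (c : K) = -1 := by rw [hab, hb0, h1]; simp
    have hβα : (β : K) = -(α : K) := by rw [hβK, hcK1]; ring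
    have hrr : rβ = -rα := by
      apply hinj
      rw [map_neg, hrα, hrβ, hβα, map_neg]
      ring
    rw [hrr, ratLegendre_neg, hβα]
    push_cast
    ring
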